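/- Let Z = 1{A=d(X)} with P(Z=1|X) = π₀(X) ∈ (0,1). Then for any square-integrable g(X), Var( Z·Y/π₀(X) − (Z−π₀(X))/π₀(X)·g(X) ) is minimized over g by g*(X) = E[Y | X, Z=1], and the minimized variance equals Var(E[Y|X,Z=1]) + E[ (1/π₀(X))·Var(Y | X, Z=1) ] when the mean E[ZY/π₀] = E[g*(X)] is subtracted. -/

import Mathlib

/-!
Write `K = g* - c`, `R = Z (Y - g*) / π₀` and `B = (Z - π₀) / π₀ · (g* - g)`, so that the AIPW
score with augmentation `g`, centred at `c`, equals `K + R + B` wherever `π₀ ≠ 0`. Each cross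
term is an `X`-measurable function times `Z - π₀` or `Z (Y - g*)` (for `R · B` after using
`Z² = Z`), and both have conditional expectation zero given `X`. Hence the second moment is
`∫ K² + ∫ R² + ∫ B²`, which is smallest at `g = g*`, and `∫ R² = ∫ v / π₀` because
`E[Z (Y - g*)² | X] = v π₀`.
-/

open MeasureTheory ProbabilityTheory

section General

variable {Ω : Type*} {mΩ : MeasurableSpace Ω} {μ : Measure Ω}

theorem integral_mul_eq_of_condExp_eq {m : MeasurableSpace Ω} (hm : m ≤ mΩ)
    [SigmaFinite (μ.trim hm)] {φ F G : Ω → ℝ} (hφ : StronglyMeasurable[m] φ)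
    (hF : Integrable F μ) (hφF : Integrable (φ * F) μ) (hFG : μ[F|m] =ᵐ[μ] G) :
    ∫ ω, φ ω * F ω ∂μ = ∫ ω, φ ω * G ω ∂μ := by
  rw [← integral_condExp hm]
  refine integral_congr_ae ?_
  filter_upwards [condExp_mul_of_stronglyMeasurable_left hφ hφF hF, hFG] with ω hpull hFGω
  exact hpull.trans (by rw [Pi.mul_apply, hFGω])

theorem integral_mul_eq_zero_of_condExp_eq_zero {m : MeasurableSpace Ω} (hm : m ≤ mΩ)
    [SigmaFinite (μ.trim hm)] {φ F : Ω → ℝ} (hφ : StronglyMeasurable[m] φ)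
    (hF : Integrable F μ) (hφF : Integrable (φ * F) μ) (hF0 : μ[F|m] =ᵐ[μ] 0) :
    ∫ ω, φ ω * F ω ∂μ = 0 := by
  simpa using integral_mul_eq_of_condExp_eq hm hφ hF hφF hF0

theorem integral_add_sq_of_integral_mul_eq_zero {f g : Ω → ℝ} (hf : MemLp f 2 μ)
    (hg : MemLp g 2 μ) (hfg : ∫ ω, f ω * g ω ∂μ = 0) :
    ∫ ω, (f ω + g ω) ^ 2 ∂μ = ∫ ω, f ω ^ 2 ∂μ + ∫ ω, g ω ^ 2 ∂μ := by
  have hcross : Integrable (fun ω => 2 * (f ω * g ω)) μ := (hf.integrable_mul hg).const_mul 2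
  calc ∫ ω, (f ω + g ω) ^ 2 ∂μ = ∫ ω, f ω ^ 2 + 2 * (f ω * g ω) + g ω ^ 2 ∂μ := by
        congr 1; ext ω; ring
    _ = ∫ ω, f ω ^ 2 ∂μ + ∫ ω, g ω ^ 2 ∂μ := by
        rw [integral_add (by exact hf.integrable_sq.add hcross) hg.integrable_sq,
          integral_add (by exact hf.integrable_sq) hcross, integral_const_mul, hfg, mul_zero,
          add_zero]

theorem abs_div_le_inv_of_abs_le_one {a p ε : ℝ} (hε : 0 < ε) (hp : ε ≤ p) (ha : |a| ≤ 1) :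
    |a / p| ≤ ε⁻¹ := by
  rw [abs_div, abs_of_pos (hε.trans_le hp), ← one_div]
  exact div_le_div₀ zero_le_one ha hε hp

end General

structure IsPropensityScore {Ω : Type*} (m : MeasurableSpace Ω) {mΩ : MeasurableSpace Ω}
    (μ : Measure Ω) (ε : ℝ) (Z P : Ω → ℝ) : Prop where
  pos : 0 < ε
  aestronglyMeasurable : AEStronglyMeasurable Z μ
  eq_zero_or_eq_one : ∀ ω, Z ω = 0 ∨ Z ω = 1
  measurable : Measurable[m] P
  bounds : ∀ᵐ ω ∂μ, ε ≤ P ω ∧ P ω ≤ 1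
  condExp_eq : μ[Z|m] =ᵐ[μ] P

namespace IsPropensityScore

variable {Ω : Type*} {m mΩ : MeasurableSpace Ω} {μ : Measure Ω} {ε : ℝ} {Z P : Ω → ℝ}

theorem mul_self (hP : IsPropensityScore m μ ε Z P) (ω : Ω) : Z ω * Z ω = Z ω := by
  rcases hP.eq_zero_or_eq_one ω with h | h <;> simp [h]

theorem abs_le_one (hP : IsPropensityScore m μ ε Z P) (ω : Ω) : |Z ω| ≤ 1 := by
  rcases hP.eq_zero_or_eq_one ω with h | h <;> simp [h]

theorem ae_abs_sub_le_one (hP : IsPropensityScore m μ ε Z P) : ∀ᵐ ω ∂μ, |Z ω - P ω| ≤ 1 := by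
  filter_upwards [hP.bounds] with ω ⟨hεP, hP1⟩
  have hε := hP.pos
  rcases hP.eq_zero_or_eq_one ω with h | h <;> rw [h, abs_le] <;> constructor <;> linarith

theorem aestronglyMeasurable_propensity (hP : IsPropensityScore m μ ε Z P) (hm : m ≤ mΩ) :
    AEStronglyMeasurable P μ :=
  (hP.measurable.mono hm le_rfl).aestronglyMeasurable

theorem integrable [IsFiniteMeasure μ] (hP : IsPropensityScore m μ ε Z P) : Integrable Z μ :=
  (memLp_top_of_bound hP.aestronglyMeasurable 1
    (ae_of_all _ fun ω => by simpa using hP.abs_le_one ω)).integrable le_top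

theorem integrable_propensity [IsFiniteMeasure μ] (hP : IsPropensityScore m μ ε Z P)
    (hm : m ≤ mΩ) : Integrable P μ :=
  (memLp_top_of_bound (hP.aestronglyMeasurable_propensity hm) 1 (by
    filter_upwards [hP.bounds] with ω ⟨hεP, hP1⟩
    rw [Real.norm_eq_abs, abs_of_nonneg (hP.pos.le.trans hεP)]
    exact hP1)).integrable le_top

theorem integrable_mul (hP : IsPropensityScore m μ ε Z P) {f : Ω → ℝ} (hf : Integrable f μ) :
    Integrable (fun ω => Z ω * f ω) μ :=
  hf.bdd_mul hP.aestronglyMeasurable (ae_of_all _ fun ω => by simpa using hP.abs_le_one ω)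

theorem memLp_div_mul (hP : IsPropensityScore m μ ε Z P) (hm : m ≤ mΩ) {f : Ω → ℝ}
    (hf : MemLp f 2 μ) : MemLp (fun ω => Z ω / P ω * f ω) 2 μ :=
  hf.mul' <| memLp_top_of_bound
    (hP.aestronglyMeasurable.div₀ (hP.aestronglyMeasurable_propensity hm)) ε⁻¹ <| by
      filter_upwards [hP.bounds] with ω hω
      exact abs_div_le_inv_of_abs_le_one hP.pos hω.1 (hP.abs_le_one ω)

theorem memLp_sub_div_mul (hP : IsPropensityScore m μ ε Z P) (hm : m ≤ mΩ) {f : Ω → ℝ}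
    (hf : MemLp f 2 μ) : MemLp (fun ω => (Z ω - P ω) / P ω * f ω) 2 μ :=
  hf.mul' <| memLp_top_of_bound
    ((hP.aestronglyMeasurable.sub (hP.aestronglyMeasurable_propensity hm)).div₀
      (hP.aestronglyMeasurable_propensity hm)) ε⁻¹ <| by
      filter_upwards [hP.bounds, hP.ae_abs_sub_le_one] with ω hω hZP
      exact abs_div_le_inv_of_abs_le_one hP.pos hω.1 hZP

theorem condExp_sub_eq_zero [IsFiniteMeasure μ] (hP : IsPropensityScore m μ ε Z P)
    (hm : m ≤ mΩ) : μ[Z - P|m] =ᵐ[μ] 0 := by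
  have hPP : μ[P|m] = P :=
    condExp_of_stronglyMeasurable hm hP.measurable.stronglyMeasurable (hP.integrable_propensity hm)
  filter_upwards [condExp_sub hP.integrable (hP.integrable_propensity hm) m, hP.condExp_eq]
    with ω hsub hZ
  rw [hsub, Pi.sub_apply, hZ, hPP, sub_self, Pi.zero_apply]

theorem integral_mul_augmentation_eq_zero [IsFiniteMeasure μ]
    (hP : IsPropensityScore m μ ε Z P) (hm : m ≤ mΩ) {K H : Ω → ℝ} (hK : Measurable[m] K)
    (hKL2 : MemLp K 2 μ) (hH : Measurable[m] H) (hHL2 : MemLp H 2 μ) :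
    ∫ ω, K ω * ((Z ω - P ω) / P ω * H ω) ∂μ = 0 := by
  have hfactor : (fun ω => K ω * ((Z ω - P ω) / P ω * H ω))
      = (fun ω => K ω * H ω / P ω) * (Z - P) := by
    ext ω; simp only [Pi.mul_apply, Pi.sub_apply]; ring
  rw [hfactor]
  refine integral_mul_eq_zero_of_condExp_eq_zero hm
    ((hK.mul hH).div hP.measurable).stronglyMeasurable (hP.integrable.sub (hP.integrable_propensity hm)) ?_ (hP.condExp_sub_eq_zero hm)
  rw [← hfactor]
  exact hKL2.integrable_mul (hP.memLp_sub_div_mul hm hHL2)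

end IsPropensityScore

/-- `G` is `E[Y | m, Z = 1]`, characterised through `E[Z Y | m] = G P`. -/
structure IsOutcomeRegression {Ω : Type*} (m : MeasurableSpace Ω) {mΩ : MeasurableSpace Ω}
    (μ : Measure Ω) (Z P Y G : Ω → ℝ) : Prop where
  measurable : Measurable[m] G
  memLp : MemLp G 2 μ
  memLp_outcome : MemLp Y 2 μ
  condExp_mul_eq : μ[fun ω => Z ω * Y ω|m] =ᵐ[μ] fun ω => G ω * P ω

namespace IsOutcomeRegression

variable {Ω : Type*} {m mΩ : MeasurableSpace Ω} {μ : Measure Ω} {ε : ℝ} {Z P Y G : Ω → ℝ}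

theorem memLp_residual (hG : IsOutcomeRegression m μ Z P Y G)
    (hP : IsPropensityScore m μ ε Z P) (hm : m ≤ mΩ) :
    MemLp (fun ω => Z ω / P ω * (Y ω - G ω)) 2 μ :=
  hP.memLp_div_mul hm (hG.memLp_outcome.sub hG.memLp)

variable [IsFiniteMeasure μ]

theorem condExp_mul_sub_eq_zero (hG : IsOutcomeRegression m μ Z P Y G)
    (hP : IsPropensityScore m μ ε Z P) :
    μ[fun ω => Z ω * (Y ω - G ω)|m] =ᵐ[μ] 0 := by
  have hZY : Integrable (fun ω => Z ω * Y ω) μ :=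
    hP.integrable_mul (hG.memLp_outcome.integrable one_le_two)
  have hGZ : Integrable (G * Z) μ :=
    (hP.integrable_mul (hG.memLp.integrable one_le_two)).congr (ae_of_all _ fun ω => mul_comm _ _)
  have hsplit : (fun ω => Z ω * (Y ω - G ω)) = (fun ω => Z ω * Y ω) - G * Z := by
    ext ω; simp only [Pi.sub_apply, Pi.mul_apply]; ring
  rw [hsplit]
  filter_upwards [condExp_sub hZY hGZ m, hG.condExp_mul_eq, hP.condExp_eq,
    condExp_mul_of_stronglyMeasurable_left hG.measurable.stronglyMeasurable hGZ hP.integrable]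
    with ω hsub hZY hZ hGZ
  rw [hsub, Pi.sub_apply, hZY, hGZ, Pi.mul_apply, hZ, sub_self, Pi.zero_apply]

theorem condExp_mul_sub_sq_eq (hG : IsOutcomeRegression m μ Z P Y G)
    (hP : IsPropensityScore m μ ε Z P) {V : Ω → ℝ}
    (hV : μ[fun ω => Z ω * Y ω ^ 2|m] =ᵐ[μ] fun ω => (V ω + G ω ^ 2) * P ω) :
    μ[fun ω => Z ω * (Y ω - G ω) ^ 2|m] =ᵐ[μ] fun ω => V ω * P ω := by
  have hY := hG.memLp_outcome
  have hZY : Integrable (fun ω => Z ω * Y ω) μ := hP.integrable_mul (hY.integrable one_le_two)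
  have hZY2 : Integrable (fun ω => Z ω * Y ω ^ 2) μ := hP.integrable_mul hY.integrable_sq
  have hGZY : Integrable ((fun ω => 2 * G ω) * fun ω => Z ω * Y ω) μ :=
    (hP.integrable_mul ((hG.memLp.integrable_mul hY).const_mul 2)).congr
      (ae_of_all _ fun ω => by simp only [Pi.mul_apply]; ring)
  have hG2Z : Integrable ((fun ω => G ω ^ 2) * Z) μ :=
    (hP.integrable_mul hG.memLp.integrable_sq).congr (ae_of_all _ fun ω => mul_comm _ _)
  have hsplit : (fun ω => Z ω * (Y ω - G ω) ^ 2)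
      = (fun ω => Z ω * Y ω ^ 2) - (fun ω => 2 * G ω) * (fun ω => Z ω * Y ω)
        + (fun ω => G ω ^ 2) * Z := by
    ext ω; simp only [Pi.add_apply, Pi.sub_apply, Pi.mul_apply]; ring
  have hGm := hG.measurable
  rw [hsplit]
  filter_upwards [condExp_add (hZY2.sub hGZY) hG2Z m, condExp_sub hZY2 hGZY m, hV,
    condExp_mul_of_stronglyMeasurable_left (hGm.const_mul 2).stronglyMeasurable hGZY hZY,
    condExp_mul_of_stronglyMeasurable_left (hGm.pow_const 2).stronglyMeasurable hG2Z hP.integrable,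
    hG.condExp_mul_eq, hP.condExp_eq] with ω hadd hsub hV hGZY hG2Z hZY hZ
  simp only [hadd, Pi.add_apply, hsub, Pi.sub_apply, hV, hGZY, hG2Z, Pi.mul_apply, hZY, hZ]
  ring

theorem integral_mul_residual_eq_zero (hG : IsOutcomeRegression m μ Z P Y G)
    (hP : IsPropensityScore m μ ε Z P) (hm : m ≤ mΩ) {K : Ω → ℝ} (hK : Measurable[m] K)
    (hKL2 : MemLp K 2 μ) :
    ∫ ω, K ω * (Z ω / P ω * (Y ω - G ω)) ∂μ = 0 := by
  have hfactor : (fun ω => K ω * (Z ω / P ω * (Y ω - G ω)))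
      = (fun ω => K ω / P ω) * fun ω => Z ω * (Y ω - G ω) := by
    ext ω; simp only [Pi.mul_apply]; ring
  rw [hfactor]
  refine integral_mul_eq_zero_of_condExp_eq_zero hm (hK.div hP.measurable).stronglyMeasurable
    (hP.integrable_mul ((hG.memLp_outcome.sub hG.memLp).integrable one_le_two)) ?_
    (hG.condExp_mul_sub_eq_zero hP)
  rw [← hfactor]
  exact hKL2.integrable_mul (hG.memLp_residual hP hm)

theorem integral_residual_mul_augmentation_eq_zero (hG : IsOutcomeRegression m μ Z P Y G)
    (hP : IsPropensityScore m μ ε Z P) (hm : m ≤ mΩ) {H : Ω → ℝ} (hH : Measurable[m] H)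
    (hHL2 : MemLp H 2 μ) :
    ∫ ω, Z ω / P ω * (Y ω - G ω) * ((Z ω - P ω) / P ω * H ω) ∂μ = 0 := by
  -- `Z * (Z - P) = Z * (1 - P)` turns the product into an `m`-measurable multiple of `Z * (Y - G)`
  have hfactor : (fun ω => Z ω / P ω * (Y ω - G ω) * ((Z ω - P ω) / P ω * H ω))
      = (fun ω => (1 - P ω) * H ω / P ω ^ 2) * fun ω => Z ω * (Y ω - G ω) := by
    ext ω
    simp only [Pi.mul_apply]
    linear_combination (Y ω - G ω) * H ω / P ω ^ 2 * hP.mul_self ω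
  rw [hfactor]
  refine integral_mul_eq_zero_of_condExp_eq_zero hm
    (((measurable_const.sub hP.measurable).mul hH).div
      (hP.measurable.pow_const 2)).stronglyMeasurable
    (hP.integrable_mul ((hG.memLp_outcome.sub hG.memLp).integrable one_le_two)) ?_
    (hG.condExp_mul_sub_eq_zero hP)
  rw [← hfactor]
  exact (hG.memLp_residual hP hm).integrable_mul (hP.memLp_sub_div_mul hm hHL2)

theorem integral_residual_sq (hG : IsOutcomeRegression m μ Z P Y G)
    (hP : IsPropensityScore m μ ε Z P) (hm : m ≤ mΩ) {V : Ω → ℝ}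
    (hV : μ[fun ω => Z ω * Y ω ^ 2|m] =ᵐ[μ] fun ω => (V ω + G ω ^ 2) * P ω) :
    ∫ ω, (Z ω / P ω * (Y ω - G ω)) ^ 2 ∂μ = ∫ ω, V ω / P ω ∂μ := by
  have hfactor : (fun ω => (Z ω / P ω * (Y ω - G ω)) ^ 2)
      = (fun ω => 1 / P ω ^ 2) * fun ω => Z ω * (Y ω - G ω) ^ 2 := by
    ext ω
    simp only [Pi.mul_apply]
    linear_combination (Y ω - G ω) ^ 2 / P ω ^ 2 * hP.mul_self ω
  have hint : Integrable ((fun ω => 1 / P ω ^ 2) * fun ω => Z ω * (Y ω - G ω) ^ 2) μ :=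
    hfactor ▸ (hG.memLp_residual hP hm).integrable_sq
  calc ∫ ω, (Z ω / P ω * (Y ω - G ω)) ^ 2 ∂μ
      = ∫ ω, 1 / P ω ^ 2 * (Z ω * (Y ω - G ω) ^ 2) ∂μ := by rw [hfactor]; rfl
    _ = ∫ ω, 1 / P ω ^ 2 * (V ω * P ω) ∂μ :=
      integral_mul_eq_of_condExp_eq hm
        (measurable_const.div (hP.measurable.pow_const 2)).stronglyMeasurable
        (hP.integrable_mul (hG.memLp_outcome.sub hG.memLp).integrable_sq) hint
        (hG.condExp_mul_sub_sq_eq hP hV)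
    _ = ∫ ω, V ω / P ω ∂μ := by
      refine integral_congr_ae ?_
      filter_upwards [hP.bounds] with ω hω
      have : P ω ≠ 0 := (hP.pos.trans_le hω.1).ne'
      field_simp

theorem integral_sq_add_residual (hG : IsOutcomeRegression m μ Z P Y G)
    (hP : IsPropensityScore m μ ε Z P) (hm : m ≤ mΩ) {V : Ω → ℝ}
    (hV : μ[fun ω => Z ω * Y ω ^ 2|m] =ᵐ[μ] fun ω => (V ω + G ω ^ 2) * P ω)
    {K : Ω → ℝ} (hK : Measurable[m] K) (hKL2 : MemLp K 2 μ) :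
    ∫ ω, (K ω + Z ω / P ω * (Y ω - G ω)) ^ 2 ∂μ = ∫ ω, K ω ^ 2 ∂μ + ∫ ω, V ω / P ω ∂μ := by
  rw [integral_add_sq_of_integral_mul_eq_zero hKL2 (hG.memLp_residual hP hm)
    (hG.integral_mul_residual_eq_zero hP hm hK hKL2), hG.integral_residual_sq hP hm hV]

theorem integral_aipw_sq (hG : IsOutcomeRegression m μ Z P Y G)
    (hP : IsPropensityScore m μ ε Z P) (hm : m ≤ mΩ) (c : ℝ) {g : Ω → ℝ}
    (hg : Measurable[m] g) (hgL2 : MemLp g 2 μ) :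
    ∫ ω, (Z ω * Y ω / P ω - (Z ω - P ω) / P ω * g ω - c) ^ 2 ∂μ
      = ∫ ω, (G ω - c + Z ω / P ω * (Y ω - G ω)) ^ 2 ∂μ
        + ∫ ω, ((Z ω - P ω) / P ω * (G ω - g ω)) ^ 2 ∂μ := by
  have hK : Measurable[m] fun ω => G ω - c := hG.measurable.sub_const c
  have hKL2 : MemLp (fun ω => G ω - c) 2 μ := hG.memLp.sub (memLp_const c)
  have hH : Measurable[m] fun ω => G ω - g ω := hG.measurable.sub hg
  have hHL2 : MemLp (fun ω => G ω - g ω) 2 μ := hG.memLp.sub hgL2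
  have hdecomp : ∀ᵐ ω ∂μ, (Z ω * Y ω / P ω - (Z ω - P ω) / P ω * g ω - c) ^ 2
      = (G ω - c + Z ω / P ω * (Y ω - G ω) + (Z ω - P ω) / P ω * (G ω - g ω)) ^ 2 := by
    filter_upwards [hP.bounds] with ω hω
    have : P ω ≠ 0 := (hP.pos.trans_le hω.1).ne'
    field_simp
    ring
  rw [integral_congr_ae hdecomp]
  refine integral_add_sq_of_integral_mul_eq_zero (hKL2.add (hG.memLp_residual hP hm))
    (hP.memLp_sub_div_mul hm hHL2) ?_
  simp_rw [add_mul]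
  rw [integral_add (by exact hKL2.integrable_mul (hP.memLp_sub_div_mul hm hHL2))
      (by exact (hG.memLp_residual hP hm).integrable_mul (hP.memLp_sub_div_mul hm hHL2)),
    hP.integral_mul_augmentation_eq_zero hm hK hKL2 hH hHL2,
    hG.integral_residual_mul_augmentation_eq_zero hP hm hH hHL2, add_zero]

end IsOutcomeRegression

theorem aipw_variance_minimizer_general
    {Ω 𝓧 : Type*} [MeasurableSpace Ω]
    [MeasurableSpace 𝓧]
    (μ : Measure Ω) [IsProbabilityMeasure μ]
    (X : Ω → 𝓧) (hX : Measurable X)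
    (Z : Ω → ℝ) (hZ : Measurable Z) (hZval : ∀ ω, Z ω = 0 ∨ Z ω = 1)
    (Y : Ω → ℝ) (hYL2 : MemLp Y 2 μ)
    -- π₀(X) = P(Z=1|X), bounded in (ε,1-ε)
    (π0 : 𝓧 → ℝ) (hπ0meas : Measurable π0)
    (hπ0 : (fun ω => π0 (X ω)) =ᵐ[μ] μ[Z | MeasurableSpace.comap X inferInstance])
    (ε : ℝ) (hε : 0 < ε)
    (hπ0pos : ∀ᵐ ω ∂μ, ε < π0 (X ω) ∧ π0 (X ω) < 1 - ε)
    -- g*(X) = E[Y | X, Z=1]: characterized by E[ZY|X] = g*(X)·π₀(X) a.s.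
    (gstar : 𝓧 → ℝ) (hgstarmeas : Measurable gstar)
    (hgstarL2 : MemLp (fun ω => gstar (X ω)) 2 μ)
    (hgstar : μ[(fun ω => Z ω * Y ω) | MeasurableSpace.comap X inferInstance]
      =ᵐ[μ] fun ω => gstar (X ω) * π0 (X ω))
    -- v(X) = Var(Y | X, Z=1): characterized by E[ZY²|X] = (v(X)+g*(X)²)·π₀(X) a.s.
    (v : 𝓧 → ℝ)
    (hv : μ[(fun ω => Z ω * Y ω ^ 2) | MeasurableSpace.comap X inferInstance]
      =ᵐ[μ] fun ω => (v (X ω) + gstar (X ω) ^ 2) * π0 (X ω)) :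
    -- minimization over square-integrable augmentations g
    (∀ g : 𝓧 → ℝ, Measurable g → MemLp (fun ω => g (X ω)) 2 μ →
      ∫ ω, (Z ω * Y ω / π0 (X ω) - (Z ω - π0 (X ω)) / π0 (X ω) * gstar (X ω)
          - ∫ ω', gstar (X ω') ∂μ) ^ 2 ∂μ
        ≤ ∫ ω, (Z ω * Y ω / π0 (X ω) - (Z ω - π0 (X ω)) / π0 (X ω) * g (X ω)
          - ∫ ω', gstar (X ω') ∂μ) ^ 2 ∂μ)
    -- the minimized variance
    ∧ ∫ ω, (Z ω * Y ω / π0 (X ω) - (Z ω - π0 (X ω)) / π0 (X ω) * gstar (X ω)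
          - ∫ ω', gstar (X ω') ∂μ) ^ 2 ∂μ
      = (∫ ω, (gstar (X ω) - ∫ ω', gstar (X ω') ∂μ) ^ 2 ∂μ)
        + ∫ ω, v (X ω) / π0 (X ω) ∂μ := by
  have hm := hX.comap_le
  have hXm : Measurable[MeasurableSpace.comap X inferInstance] X := comap_measurable X
  have hP : IsPropensityScore (MeasurableSpace.comap X inferInstance) μ ε Z (fun ω => π0 (X ω)) :=
    ⟨hε, hZ.aestronglyMeasurable, hZval, hπ0meas.comp hXm,
      hπ0pos.mono fun ω h => ⟨h.1.le, by linarith [h.2]⟩, hπ0.symm⟩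
  have hG : IsOutcomeRegression (MeasurableSpace.comap X inferInstance) μ Z
      (fun ω => π0 (X ω)) Y (fun ω => gstar (X ω)) :=
    ⟨hgstarmeas.comp hXm, hgstarL2, hYL2, hgstar⟩
  set c := ∫ ω', gstar (X ω') ∂μ
  have hvar_gstar := hG.integral_aipw_sq hP hm c (g := fun ω => gstar (X ω))
    (hgstarmeas.comp hXm) hgstarL2
  simp only [sub_self, mul_zero, zero_pow two_ne_zero, integral_zero, add_zero] at hvar_gstar
  refine ⟨fun g hg hgL2 => ?_, ?_⟩
  · rw [hvar_gstar, hG.integral_aipw_sq hP hm c (g := fun ω => g (X ω)) (hg.comp hXm) hgL2]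
    exact le_add_of_nonneg_right (integral_nonneg fun ω => sq_nonneg _)
  · rw [hvar_gstar, hG.integral_sq_add_residual hP hm hv (K := fun ω => gstar (X ω) - c)
      ((hgstarmeas.comp hXm).sub_const c) (hgstarL2.sub (memLp_const c))]

/-- With `Z = 1{A=d(X)}`, `π₀(X) = P(Z=1|X)` and mean subtracted at
`E[ZY/π₀] = E[g*(X)]`, the variance of the AIPW function
`ZY/π₀(X) - (Z-π₀(X))/π₀(X)·g(X)` over square-integrable `g` is minimized at
`g*(X) = E[Y|X,Z=1]`, and the minimized variance equals
`Var(E[Y|X,Z=1]) + E[(1/π₀(X))·Var(Y|X,Z=1)]`. -/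
theorem aipw_variance_minimizer
    {Ω 𝓧 : Type*} [MeasurableSpace Ω] [StandardBorelSpace Ω] [Nonempty Ω]
    [MeasurableSpace 𝓧]
    (μ : Measure Ω) [IsProbabilityMeasure μ]
    (X : Ω → 𝓧) (hX : Measurable X)
    (Z : Ω → ℝ) (hZ : Measurable Z) (hZval : ∀ ω, Z ω = 0 ∨ Z ω = 1)
    (Y : Ω → ℝ) (hY : Measurable Y) (hYL2 : MemLp Y 2 μ)
    -- π₀(X) = P(Z=1|X), bounded in (ε,1-ε)
    (π0 : 𝓧 → ℝ) (hπ0meas : Measurable π0)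
    (hπ0 : (fun ω => π0 (X ω)) =ᵐ[μ] μ[Z | MeasurableSpace.comap X inferInstance])
    (ε : ℝ) (hε : 0 < ε)
    (hπ0pos : ∀ᵐ ω ∂μ, ε < π0 (X ω) ∧ π0 (X ω) < 1 - ε)
    -- g*(X) = E[Y | X, Z=1]: characterized by E[ZY|X] = g*(X)·π₀(X) a.s.
    (gstar : 𝓧 → ℝ) (hgstarmeas : Measurable gstar)
    (hgstarL2 : MemLp (fun ω => gstar (X ω)) 2 μ)
    (hgstar : μ[(fun ω => Z ω * Y ω) | MeasurableSpace.comap X inferInstance]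
      =ᵐ[μ] fun ω => gstar (X ω) * π0 (X ω))
    -- v(X) = Var(Y | X, Z=1): characterized by E[ZY²|X] = (v(X)+g*(X)²)·π₀(X) a.s.
    (v : 𝓧 → ℝ) (hvmeas : Measurable v)
    (hvint : Integrable (fun ω => v (X ω) / π0 (X ω)) μ)
    (hv : μ[(fun ω => Z ω * Y ω ^ 2) | MeasurableSpace.comap X inferInstance]
      =ᵐ[μ] fun ω => (v (X ω) + gstar (X ω) ^ 2) * π0 (X ω)) :
    -- minimization over square-integrable augmentations g
    (∀ g : 𝓧 → ℝ, Measurable g → MemLp (fun ω => g (X ω)) 2 μ →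
      ∫ ω, (Z ω * Y ω / π0 (X ω) - (Z ω - π0 (X ω)) / π0 (X ω) * gstar (X ω)
          - ∫ ω', gstar (X ω') ∂μ) ^ 2 ∂μ
        ≤ ∫ ω, (Z ω * Y ω / π0 (X ω) - (Z ω - π0 (X ω)) / π0 (X ω) * g (X ω)
          - ∫ ω', gstar (X ω') ∂μ) ^ 2 ∂μ)
    -- the minimized variance
    ∧ ∫ ω, (Z ω * Y ω / π0 (X ω) - (Z ω - π0 (X ω)) / π0 (X ω) * gstar (X ω)
          - ∫ ω', gstar (X ω') ∂μ) ^ 2 ∂μ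
      = (∫ ω, (gstar (X ω) - ∫ ω', gstar (X ω') ∂μ) ^ 2 ∂μ)
        + ∫ ω, v (X ω) / π0 (X ω) ∂μ :=
  aipw_variance_minimizer_general μ X hX Z hZ hZval Y hYL2 π0 hπ0meas hπ0 ε hε hπ0pos gstar
    hgstarmeas hgstarL2 hgstar v hv
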